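/- With λ = 4G/π the spanning tree constant of the square lattice and K_c = arctanh(√2 − 1), the relation [Z(K_c)]² = 2 e^λ holds. -/

import Mathlib

open Real

/-- Inverse hyperbolic tangent. -/
noncomputable def arctanh (x : ℝ) : ℝ := (1/2) * Real.log ((1+x)/(1-x))

noncomputable def catalanG : ℝ := ∑' n : ℕ, (-1 : ℝ)^n / (2*n+1)^2

noncomputable def logZ (K : ℝ) : ℝ :=
  Real.log (2 * Real.cosh (2*K)) + (1 / (8*π^2)) *
    (∫ k₁ in (-π)..π, ∫ k₂ in (-π)..π,
      Real.log (1 - ((2 * Real.tanh (2*K) / Real.cosh (2*K)) / 2) *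
        (Real.cos k₁ + Real.cos k₂)))

section Aux
open MeasureTheory intervalIntegral Set

lemma hasSum_log_kernel {r : ℝ} (hr : |r| < 1) (x : ℝ) :
    HasSum (fun n : ℕ => -2 * (r^n * Real.cos (n*x) / n))
      (Real.log (1 - 2*r*Real.cos x + r^2)) := by
  set z : ℂ := (r : ℂ) * Complex.exp (x * Complex.I) with hz
  have hznorm : ‖z‖ < 1 := by
    rw [hz]
    simp [Complex.norm_exp]
    simpa [Real.norm_eq_abs] using hr
  have h := (Complex.hasSum_taylorSeries_neg_log hznorm).mapL Complex.reCLM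
  have hre : ∀ n : ℕ, ((z^n / n : ℂ)).re = r^n * Real.cos (n*x) / n := by
    intro n
    have : z ^ n = (r:ℂ)^n * Complex.exp ((n*x : ℝ) * Complex.I) := by
      rw [hz, mul_pow, ← Complex.exp_nat_mul]
      push_cast
      ring_nf
    rw [this]
    have : ((n:ℂ)) = ((n:ℝ):ℂ) := by norm_num
    rw [this, Complex.div_ofReal_re]
    congr 1
    rw [show ((r:ℂ)^n) = ((r^n : ℝ):ℂ) by push_cast; ring]
    rw [Complex.re_ofReal_mul, Complex.exp_ofReal_mul_I_re]
  have habs : Real.log (1 - 2*r*Real.cos x + r^2) = -2 * (-(Complex.log (1 - z)).re) := by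
    rw [Complex.log_re]
    have h1 : ‖1 - z‖ ^ 2 = 1 - 2*r*Real.cos x + r^2 := by
      rw [Complex.sq_norm, hz]
      simp [Complex.normSq_apply, Complex.exp_ofReal_mul_I_re, Complex.exp_ofReal_mul_I_im]
      ring_nf
      rw [show Real.cos x ^2 = 1 - Real.sin x ^2 by rw [Real.cos_sq']]
      ring
    have h2 : (0:ℝ) < ‖1 - z‖ := by
      have : z ≠ 1 := by
        intro hh; rw [hh] at hznorm; simp at hznorm
      simpa [norm_pos_iff, sub_ne_zero] using fun hc => this hc.symm
    rw [← h1, Real.log_pow]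
    push_cast; ring
  rw [habs]
  have := (h.mul_left (-2))
  simp only [Complex.reCLM_apply] at this
  convert this using 2 with n
  rfl
  rw [hre n]
  simp

lemma integral_cos_nat_mul {n : ℕ} (h : 0 < n) : ∫ x in (-π)..π, Real.cos (n*x) = 0 := by
  have hn : (n:ℝ) ≠ 0 := by positivity
  have := intervalIntegral.integral_comp_mul_left (a := -π) (b := π) Real.cos hn
  rw [this, show (n:ℝ) * -π = -((n:ℝ)*π) by ring]
  simp [Real.sin_nat_mul_pi]

lemma integral_log_kernel {r : ℝ} (hr : |r| < 1) :
    ∫ x in (-π)..π, Real.log (1 - 2*r*Real.cos x + r^2) = 0 := by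
  have key : HasSum (fun n : ℕ => ∫ x in (-π)..π, -2 * (r^n * Real.cos (n*x) / n))
      (∫ x in (-π)..π, Real.log (1 - 2*r*Real.cos x + r^2)) := by
    apply intervalIntegral.hasSum_integral_of_dominated_convergence
      (bound := fun n _ => 2 * |r|^n)
    · intro n
      apply Continuous.aestronglyMeasurable
      continuity
    · intro n
      filter_upwards with x _
      rcases Nat.eq_zero_or_pos n with h | h
      · simp [h]
      · have h1 : (1:ℝ) ≤ n := by exact_mod_cast h
        rw [norm_mul, norm_div]
        simp only [norm_neg, Real.norm_two, Real.norm_eq_abs]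
        rw [abs_mul, abs_pow]
        calc |2| * (|r|^n * |Real.cos (n*x)| / |(n:ℝ)|)
            ≤ 2 * (|r|^n * 1 / 1) := by
              rw [abs_two]
              gcongr
              · exact Real.abs_cos_le_one _
              · simpa using h1
          _ = 2 * |r|^n := by ring
    · filter_upwards with x _
      exact (summable_geometric_of_lt_one (abs_nonneg r) hr).mul_left 2
    · exact _root_.intervalIntegrable_const
    · filter_upwards with x _
      exact hasSum_log_kernel hr x
  have hz : ∀ n : ℕ, (∫ x in (-π)..π, -2 * (r^n * Real.cos (n*x) / n)) = 0 := by
    intro n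
    rcases Nat.eq_zero_or_pos n with h | h
    · simp [h]
    rw [intervalIntegral.integral_const_mul]
    simp only [div_eq_mul_inv]
    rw [show (fun x => r^n * Real.cos (n*x) * ((n:ℝ))⁻¹) = fun x => (r^n * ((n:ℝ))⁻¹) * Real.cos (n*x) by funext x; ring]
    rw [intervalIntegral.integral_const_mul, integral_cos_nat_mul h]
    ring
  have := key
  simp only [hz] at this
  exact (hasSum_zero.unique this).symm

lemma integral_log_sub_cos {A : ℝ} (hA : 1 < A) :
    ∫ x in (-π)..π, Real.log (A - Real.cos x)
      = 2*π * Real.log ((A + Real.sqrt (A^2-1))/2) := by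
  set s := Real.sqrt (A^2-1) with hs
  have hA0 : (0:ℝ) < A := by linarith
  have hs2 : s^2 = A^2 - 1 := Real.sq_sqrt (by nlinarith)
  have hs0 : 0 ≤ s := Real.sqrt_nonneg _
  set r := A - s with hr
  have hrpos : 0 < r := by nlinarith [sq_nonneg (A - s)]
  have h1 : A - 1 < s := by nlinarith [hs2, hs0]
  have hrlt : r < 1 := by rw [hr]; linarith
  have hrA : 1 + r^2 = 2*A*r := by
    rw [hr]; nlinarith
  have hinv : r * (A + s) = 1 := by rw [hr]; nlinarith
  have key : ∀ x : ℝ, A - Real.cos x = (1/(2*r)) * (1 - 2*r*Real.cos x + r^2) := by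
    intro x
    field_simp
    nlinarith [Real.cos_sq_le_one x]
  have hpos : ∀ x : ℝ, 0 < 1 - 2*r*Real.cos x + r^2 := by
    intro x
    nlinarith [Real.neg_one_le_cos x, Real.cos_le_one x, sq_nonneg (1-r)]
  have hlog : ∀ x : ℝ, Real.log (A - Real.cos x)
      = Real.log (1/(2*r)) + Real.log (1 - 2*r*Real.cos x + r^2) := by
    intro x
    rw [key x, Real.log_mul (by positivity) (hpos x).ne']
  rw [intervalIntegral.integral_congr (fun x _ => hlog x)]
  rw [intervalIntegral.integral_add intervalIntegrable_const ?hint]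
  case hint =>
    apply Continuous.intervalIntegrable
    exact Continuous.log (by continuity) (fun x => (hpos x).ne')
  rw [integral_log_kernel (by rw [abs_of_pos hrpos]; exact hrlt)]
  rw [intervalIntegral.integral_const]
  have h2r : 1/(2*r) = (A + s)/2 := by
    field_simp
    linarith [hinv]
  rw [h2r, smul_eq_mul]
  ring

lemma arsinh_eq_integral (s : ℝ) :
    Real.arsinh s = ∫ t in (0:ℝ)..1, s / Real.sqrt (1 + t^2 * s^2) := by
  have hderiv : ∀ t ∈ Set.uIcc (0:ℝ) 1, HasDerivAt (fun t => Real.arsinh (t * s))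
      (s / Real.sqrt (1 + t^2 * s^2)) t := by
    intro t _
    have h1 : HasDerivAt (fun t : ℝ => t * s) s t := by
      simpa using (hasDerivAt_id t).mul_const s
    have h2 := (Real.hasDerivAt_arsinh (t*s)).comp t h1
    refine h2.congr_deriv ?_
    rw [mul_pow]
    field_simp
  have hcont : IntervalIntegrable (fun t => s / Real.sqrt (1 + t^2*s^2)) volume 0 1 := by
    apply Continuous.intervalIntegrable
    apply Continuous.div continuous_const
    · exact (Real.continuous_sqrt.comp (by continuity))
    · intro t
      have : (0:ℝ) < 1 + t^2*s^2 := by positivity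
      positivity
  rw [intervalIntegral.integral_eq_sub_of_hasDerivAt hderiv hcont]
  simp

lemma inner_integral_eq_arctan {t : ℝ} (ht : 0 < t) :
    ∫ u in (0:ℝ)..(π/2), Real.sin u / Real.sqrt (1 + t^2 * Real.sin u ^ 2)
      = Real.arctan t / t := by
  have ht2 : (0:ℝ) < 1 + t^2 := by positivity
  obtain ⟨c, hc0, hc2, hcs⟩ : ∃ c : ℝ, 0 < c ∧ c^2 = 1 + t^2 ∧ Real.sqrt (1+t^2) = c :=
    ⟨Real.sqrt (1 + t^2), Real.sqrt_pos.mpr ht2, Real.sq_sqrt ht2.le, rfl⟩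
  have hderiv : ∀ u ∈ Set.uIcc (0:ℝ) (π/2),
      HasDerivAt (fun u => -(1/t) * Real.arcsin (t * Real.cos u / c))
        (Real.sin u / Real.sqrt (1 + t^2 * Real.sin u ^ 2)) u := by
    intro u _
    have hb : |t * Real.cos u / c| < 1 := by
      rw [abs_div, abs_of_pos hc0, div_lt_one hc0, abs_mul, abs_of_pos ht]
      calc t * |Real.cos u| ≤ t * 1 := by gcongr; exact Real.abs_cos_le_one u
        _ < c := by
          nlinarith [Real.sq_sqrt ht2.le, Real.sqrt_nonneg (1+t^2)]
    have hne1 : t * Real.cos u / c ≠ -1 := by intro h; rw [h] at hb; simp at hb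
    have hne2 : t * Real.cos u / c ≠ 1 := by intro h; rw [h] at hb; simp at hb
    have hin : HasDerivAt (fun u => t * Real.cos u / c) (-(t * Real.sin u)/c) u := by
      have := ((Real.hasDerivAt_cos u).const_mul t).div_const c
      refine this.congr_deriv ?_
      ring
    have h2 := (Real.hasDerivAt_arcsin hne1 hne2).comp u hin
    have h3 := h2.const_mul (-(1/t))
    refine h3.congr_deriv ?_
    have hy : (0:ℝ) ≤ 1 - (t*Real.cos u/c)^2 := by
      nlinarith [sq_abs (t*Real.cos u/c), abs_nonneg (t*Real.cos u/c)]
    have key : Real.sqrt (1 - (t * Real.cos u / c)^2) * c = Real.sqrt (1 + t^2 * Real.sin u ^2) := by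
      have h2 : (1 - (t*Real.cos u/c)^2) * c^2 = 1 + t^2*Real.sin u^2 := by
        have hcos : Real.cos u ^2 = 1 - Real.sin u ^2 := by rw [Real.cos_sq']
        field_simp
        nlinarith [hc2, hcos]
      calc Real.sqrt (1 - (t*Real.cos u/c)^2) * c
          = Real.sqrt ((1 - (t*Real.cos u/c)^2) * c^2) := by
            rw [Real.sqrt_mul hy, Real.sqrt_sq hc0.le]
        _ = _ := by rw [h2]
    have hsq : (0:ℝ) < Real.sqrt (1 - (t * Real.cos u / c)^2) := by
      apply Real.sqrt_pos.mpr
      nlinarith [sq_abs (t*Real.cos u/c), abs_nonneg (t*Real.cos u/c)]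
    have heq : -(1/t) * (1 / Real.sqrt (1 - (t * Real.cos u / c) ^ 2) * (-(t * Real.sin u) / c))
        = Real.sin u / (Real.sqrt (1 - (t * Real.cos u / c) ^ 2) * c) := by
      have hq : (t*Real.cos u)^2 < c^2 := by
        have h := abs_lt.mp hb
        have h1 : t * Real.cos u < c := by
          have := h.2; rw [div_lt_iff₀ hc0] at this; linarith
        have h2 : -c < t * Real.cos u := by
          have := h.1; rw [lt_div_iff₀ hc0] at this; linarith
        nlinarith
      have hX : (0:ℝ) < Real.sqrt (c^2 - (t*Real.cos u)^2) := Real.sqrt_pos.mpr (by linarith)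
      field_simp
    rw [heq, key]
  have hcont : IntervalIntegrable (fun u => Real.sin u / Real.sqrt (1 + t^2*Real.sin u^2)) volume 0 (π/2) := by
    apply Continuous.intervalIntegrable
    apply Continuous.div Real.continuous_sin
    · exact (Real.continuous_sqrt.comp (by continuity))
    · intro u
      have : (0:ℝ) < 1 + t^2*Real.sin u^2 := by positivity
      positivity
  rw [intervalIntegral.integral_eq_sub_of_hasDerivAt hderiv hcont]
  rw [Real.cos_pi_div_two, Real.cos_zero]
  rw [Real.arctan_eq_arcsin, hcs]
  field_simp
  simp

lemma integral_arsinh_sin : ∫ u in (0:ℝ)..(π/2), Real.arsinh (Real.sin u)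
    = ∫ t in (0:ℝ)..1, Real.arctan t / t := by
  have hcontF : Continuous (fun p : ℝ × ℝ => Real.sin p.1 / Real.sqrt (1 + p.2^2 * Real.sin p.1 ^ 2)) := by
    have h1 : Continuous (fun p : ℝ × ℝ => Real.sin p.1) := Real.continuous_sin.comp continuous_fst
    have h2 : Continuous (fun p : ℝ × ℝ => 1 + p.2^2 * Real.sin p.1 ^ 2) :=
      continuous_const.add ((continuous_snd.pow 2).mul (h1.pow 2))
    apply Continuous.div h1 (Real.continuous_sqrt.comp h2)
    intro p
    have h : (0:ℝ) < 1 + p.2^2 * Real.sin p.1 ^2 := by positivity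
    exact (Real.sqrt_pos.mpr h).ne'
  have hpi : (0:ℝ) ≤ π/2 := by positivity
  have hInt : Integrable (Function.uncurry fun u t => Real.sin u / Real.sqrt (1 + t^2 * Real.sin u ^ 2))
      ((volume.restrict (Ioc (0:ℝ) (π/2))).prod (volume.restrict (Ioc (0:ℝ) 1))) := by
    rw [MeasureTheory.Measure.prod_restrict]
    have hIcc : IntegrableOn (Function.uncurry fun u t => Real.sin u / Real.sqrt (1 + t^2 * Real.sin u ^ 2))
        (Icc (0:ℝ) (π/2) ×ˢ Icc (0:ℝ) 1) (volume.prod volume) := by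
      rw [← MeasureTheory.Measure.volume_eq_prod]
      apply ContinuousOn.integrableOn_compact (isCompact_Icc.prod isCompact_Icc)
      exact hcontF.continuousOn
    exact hIcc.mono_set (Set.prod_mono Set.Ioc_subset_Icc_self Set.Ioc_subset_Icc_self)
  calc ∫ u in (0:ℝ)..(π/2), Real.arsinh (Real.sin u)
      = ∫ u in (0:ℝ)..(π/2), ∫ t in (0:ℝ)..1, Real.sin u / Real.sqrt (1 + t^2 * Real.sin u ^ 2) := by
        apply intervalIntegral.integral_congr
        intro u _
        exact arsinh_eq_integral (Real.sin u)
    _ = ∫ t in (0:ℝ)..1, ∫ u in (0:ℝ)..(π/2), Real.sin u / Real.sqrt (1 + t^2 * Real.sin u ^ 2) := by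
        rw [intervalIntegral.integral_of_le hpi, intervalIntegral.integral_of_le (zero_le_one)]
        simp_rw [intervalIntegral.integral_of_le hpi, intervalIntegral.integral_of_le (zero_le_one)]
        exact MeasureTheory.integral_integral_swap hInt
    _ = ∫ t in (0:ℝ)..1, Real.arctan t / t := by
        apply intervalIntegral.integral_congr_ae
        have h0 : ∀ᵐ t : ℝ, t ≠ 0 := by
          have : volume ({0} : Set ℝ) = 0 := measure_singleton 0
          exact MeasureTheory.measure_eq_zero_iff_ae_notMem.mp this
        filter_upwards [h0] with t ht0 htmem
        have htpos : 0 < t := by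
          rcases Set.mem_uIoc.mp htmem with h | h
          · exact h.1
          · linarith [h.1, h.2]
        exact inner_integral_eq_arctan htpos


lemma integral_arctan_div : ∫ t in (0:ℝ)..1, Real.arctan t / t = catalanG := by
  have h01 : (0:ℝ) ≤ 1 := zero_le_one
  rw [intervalIntegral.integral_of_le h01]
  have hae : ∀ᵐ t ∂(volume.restrict (Set.Ioc (0:ℝ) 1)),
      Real.arctan t / t = ∑' n : ℕ, (-1:ℝ)^n * t^(2*n) / (2*n+1) := by
    have h1 : ∀ᵐ t ∂(volume.restrict (Set.Ioc (0:ℝ) 1)), t ∈ Set.Ioo (0:ℝ) 1 := by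
      have : (1:ℝ) ∈ ({1} : Set ℝ) := rfl
      have hsub : Set.Ioc (0:ℝ) 1 \ {1} ⊆ Set.Ioo 0 1 := by
        intro x hx
        exact ⟨hx.1.1, lt_of_le_of_ne hx.1.2 (fun h => hx.2 (by simp [h]))⟩
      have hnull : volume ({1} : Set ℝ) = 0 := measure_singleton 1
      filter_upwards [MeasureTheory.ae_restrict_mem measurableSet_Ioc,
        MeasureTheory.ae_restrict_of_ae (MeasureTheory.measure_eq_zero_iff_ae_notMem.mp hnull)] with t ht ht1
      exact hsub ⟨ht, ht1⟩
    filter_upwards [h1] with t ht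
    have hnorm : ‖t‖ < 1 := by
      rw [Real.norm_eq_abs, abs_of_pos ht.1]; exact ht.2
    have hsum := Real.hasSum_arctan hnorm
    have := hsum.div_const t
    rw [eq_comm]
    apply HasSum.tsum_eq
    convert this using 2 with n
    rfl
    have ht0 : t ≠ 0 := ht.1.ne'
    field_simp
    push_cast
    ring
  rw [MeasureTheory.integral_congr_ae hae]
  rw [← MeasureTheory.integral_tsum_of_summable_integral_norm]
  · have hint : ∀ n : ℕ, ∫ t in Set.Ioc (0:ℝ) 1, (-1:ℝ)^n * t^(2*n) / (2*n+1)
        = (-1:ℝ)^n / (2*n+1)^2 := by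
      intro n
      rw [← intervalIntegral.integral_of_le h01]
      simp_rw [div_eq_mul_inv, mul_comm ((-1:ℝ)^n), mul_assoc]
      rw [intervalIntegral.integral_mul_const, integral_pow]
      have hne : (2*(n:ℝ)+1) ≠ 0 := by positivity
      push_cast
      field_simp
      ring
    rw [funext hint]
    rfl
  · intro n
    apply Continuous.integrableOn_Ioc
    continuity
  · have heq : ∀ n : ℕ, (∫ t in Set.Ioc (0:ℝ) 1, ‖(-1:ℝ)^n * t^(2*n) / (2*n+1)‖) = 1/(2*n+1)^2 := by
      intro n
      have : ∀ t ∈ Set.Ioc (0:ℝ) 1, ‖(-1:ℝ)^n * t^(2*n) / (2*n+1)‖ = t^(2*n) / (2*n+1) := by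
        intro t ht
        rw [Real.norm_eq_abs, abs_div, abs_mul, abs_pow, abs_neg, abs_one, one_pow, one_mul,
          abs_of_pos (show (0:ℝ) < 2*n+1 by positivity), abs_pow, abs_of_pos ht.1]
      rw [MeasureTheory.setIntegral_congr_fun measurableSet_Ioc this]
      rw [← intervalIntegral.integral_of_le h01]
      rw [intervalIntegral.integral_div, integral_pow]
      have hne : (2*(n:ℝ)+1) ≠ 0 := by positivity
      push_cast
      field_simp
      ring
    rw [funext heq]
    have h := Real.summable_one_div_nat_pow.mpr (show 1 < 2 by norm_num)
    have h1 : Summable (fun n : ℕ => 1/((n:ℝ)+1)^2) := by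
      have := (summable_nat_add_iff 1).mpr h
      exact this.congr (fun n => by push_cast; ring)
    apply Summable.of_nonneg_of_le (fun n => by positivity) ?_ h1
    intro n
    rw [div_le_div_iff₀ (by positivity) (by positivity)]
    nlinarith [Nat.cast_nonneg (α:=ℝ) n]

lemma integral_arsinh_sin_eq : ∫ u in (0:ℝ)..(π/2), Real.arsinh (Real.sin u) = catalanG := by
  rw [integral_arsinh_sin, integral_arctan_div]


lemma log_A_eq_arsinh {c : ℝ} (hc1 : c ≤ 1) (hc2 : -1 ≤ c) :
    Real.log ((2 - c) + Real.sqrt ((2-c)^2 - 1))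
      = 2 * Real.arsinh (Real.sqrt ((1-c)/2)) := by
  set s := Real.sqrt ((1-c)/2) with hs
  have hs0 : 0 ≤ s := Real.sqrt_nonneg _
  have hs2 : s^2 = (1-c)/2 := Real.sq_sqrt (by linarith)
  set u := Real.sqrt (1 + s^2) with hu
  have hu0 : 0 ≤ u := Real.sqrt_nonneg _
  have hu2 : u^2 = 1 + s^2 := Real.sq_sqrt (by positivity)
  have h1 : Real.sqrt ((2-c)^2 - 1) = 2*s*u := by
    have : (2-c)^2 - 1 = (2*s*u)^2 := by
      rw [mul_pow, mul_pow, hs2, hu2, hs2]; ring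
    rw [this, Real.sqrt_sq (by positivity)]
  have h2 : (2 - c) + 2*s*u = (s + u)^2 := by
    rw [add_sq, hs2, hu2, hs2]; ring
  rw [h1, h2, Real.log_pow, Real.arsinh]
  push_cast
  try rw [← hu2, Real.sqrt_sq hu0]
  try ring

lemma inner_closed {c : ℝ} (hc : c < 1) (hc' : -1 ≤ c) :
    ∫ x in (-π)..π, Real.log (1 - 1/2 * (c + Real.cos x))
      = 4*π*Real.arsinh (Real.sqrt ((1-c)/2)) - 4*π*Real.log 2 := by
  have hA : 1 < 2 - c := by linarith
  have hpt : ∀ x : ℝ, Real.log (1 - 1/2 * (c + Real.cos x))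
      = Real.log ((2 - c) - Real.cos x) - Real.log 2 := by
    intro x
    rw [← Real.log_div (by nlinarith [Real.cos_le_one x, Real.neg_one_le_cos x]) two_ne_zero]
    congr 1
    ring
  rw [intervalIntegral.integral_congr (fun x _ => hpt x)]
  rw [intervalIntegral.integral_sub ?h1 intervalIntegrable_const]
  case h1 =>
    apply Continuous.intervalIntegrable
    apply Continuous.log (by continuity)
    intro x
    nlinarith [Real.cos_le_one x]
  rw [integral_log_sub_cos hA, intervalIntegral.integral_const, smul_eq_mul]
  rw [Real.log_div (by nlinarith [Real.sqrt_nonneg ((2-c)^2-1)]) two_ne_zero]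
  rw [log_A_eq_arsinh hc.le hc']
  ring

lemma double_integral :
    (∫ k₁ in (-π)..π, ∫ k₂ in (-π)..π, Real.log (1 - 1/2 * (Real.cos k₁ + Real.cos k₂)))
      = 16*π*catalanG - 8*π^2*Real.log 2 := by
  have hπ := Real.pi_pos
  have hae : ∀ᵐ k₁ : ℝ, k₁ ∈ Set.uIoc (-π) π →
      (∫ k₂ in (-π)..π, Real.log (1 - 1/2 * (Real.cos k₁ + Real.cos k₂)))
        = 4*π*Real.arsinh (Real.sqrt ((1 - Real.cos k₁)/2)) - 4*π*Real.log 2 := by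
    have h0 : ∀ᵐ k₁ : ℝ, k₁ ≠ 0 :=
      MeasureTheory.measure_eq_zero_iff_ae_notMem.mp (measure_singleton 0)
    filter_upwards [h0] with k₁ hk0 hkmem
    have hm : k₁ ∈ Set.Ioc (-π) π := by
      rwa [Set.uIoc_of_le (by linarith : -π ≤ π)] at hkmem
    have hcos : Real.cos k₁ < 1 := by
      rcases lt_or_eq_of_le (Real.cos_le_one k₁) with h | h
      · exact h
      · exfalso
        obtain ⟨n, hn⟩ := (Real.cos_eq_one_iff k₁).mp h
        rcases lt_trichotomy n 0 with hlt | heq | hgt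
        · have hn1 : n ≤ -1 := by omega
          have : (n:ℝ) ≤ -1 := by exact_mod_cast hn1
          nlinarith [hm.1]
        · rw [heq] at hn; simp at hn; exact hk0 hn.symm
        · have hn1 : 1 ≤ n := by omega
          have : (1:ℝ) ≤ (n:ℝ) := by exact_mod_cast hn1
          nlinarith [hm.2]
    exact inner_closed hcos (Real.neg_one_le_cos k₁)
  rw [intervalIntegral.integral_congr_ae hae]
  have harsinh_cont : Continuous (fun t : ℝ => Real.arsinh (Real.sqrt ((1 - Real.cos t)/2))) :=
    Real.continuous_arsinh.comp (Real.continuous_sqrt.comp (by continuity))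
  rw [intervalIntegral.integral_sub ?hi1 intervalIntegrable_const]
  case hi1 =>
    exact (continuous_const.mul harsinh_cont).intervalIntegrable _ _
  rw [intervalIntegral.integral_const_mul, intervalIntegral.integral_const, smul_eq_mul]
  -- J = ∫_{-π}^{π} arsinh(sqrt((1-cos t)/2)) = 4 * catalanG
  have hJ : (∫ t in (-π)..π, Real.arsinh (Real.sqrt ((1 - Real.cos t)/2))) = 4 * catalanG := by
    have hsplit : (∫ t in (-π)..(0:ℝ), Real.arsinh (Real.sqrt ((1 - Real.cos t)/2)))
        + (∫ t in (0:ℝ)..π, Real.arsinh (Real.sqrt ((1 - Real.cos t)/2)))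
        = ∫ t in (-π)..π, Real.arsinh (Real.sqrt ((1 - Real.cos t)/2)) :=
      intervalIntegral.integral_add_adjacent_intervals
        (harsinh_cont.intervalIntegrable _ _) (harsinh_cont.intervalIntegrable _ _)
    have hneg : (∫ t in (-π)..(0:ℝ), Real.arsinh (Real.sqrt ((1 - Real.cos t)/2)))
        = ∫ t in (0:ℝ)..π, Real.arsinh (Real.sqrt ((1 - Real.cos t)/2)) := by
      have := intervalIntegral.integral_comp_neg
        (a := 0) (b := π) (fun t => Real.arsinh (Real.sqrt ((1 - Real.cos t)/2)))
      simp only [Real.cos_neg, neg_zero] at this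
      rw [← this]
    have hhalf : (∫ t in (0:ℝ)..π, Real.arsinh (Real.sqrt ((1 - Real.cos t)/2)))
        = 2 * catalanG := by
      have hcongr : ∀ t ∈ Set.uIcc (0:ℝ) π, Real.arsinh (Real.sqrt ((1 - Real.cos t)/2))
          = Real.arsinh (Real.sin (t/2)) := by
        intro t ht
        rw [Set.uIcc_of_le hπ.le] at ht
        rw [Real.sin_half_eq_sqrt ht.1 (by linarith [ht.2])]
      rw [intervalIntegral.integral_congr hcongr]
      have := intervalIntegral.integral_comp_div (a := 0) (b := π) (c := 2)
        (fun u => Real.arsinh (Real.sin u)) two_ne_zero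
      rw [this]
      norm_num
      try rw [integral_arsinh_sin_eq]
      try ring
    linarith [hsplit, hneg, hhalf]
  rw [hJ]
  ring

end Aux

theorem critical_Z_spanning_tree :
    (Real.exp (logZ (arctanh (Real.sqrt 2 - 1))))^2
      = 2 * Real.exp (4 * catalanG / π) := by
  have hπ := Real.pi_pos
  have hs2 : Real.sqrt 2 ^ 2 = 2 := Real.sq_sqrt (by norm_num)
  have hspos : (0:ℝ) < Real.sqrt 2 := Real.sqrt_pos.mpr (by norm_num)
  have hslt : Real.sqrt 2 < 2 := by nlinarith
  set K := arctanh (Real.sqrt 2 - 1) with hK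
  have hpos : (0:ℝ) < 1 + Real.sqrt 2 := by linarith
  have h2K : 2*K = Real.log (1 + Real.sqrt 2) := by
    rw [hK, arctanh]
    have hval : (1+(Real.sqrt 2 - 1))/(1-(Real.sqrt 2 - 1)) = 1 + Real.sqrt 2 := by
      rw [div_eq_iff (by linarith : 1-(Real.sqrt 2 - 1) ≠ 0)]
      linear_combination hs2
    rw [hval]; ring
  have hinv : (1 + Real.sqrt 2)⁻¹ = Real.sqrt 2 - 1 := by
    apply inv_eq_of_mul_eq_one_right
    linear_combination hs2
  have hcosh : Real.cosh (2*K) = Real.sqrt 2 := by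
    rw [h2K, Real.cosh_eq, Real.exp_log hpos, Real.exp_neg, Real.exp_log hpos, hinv]
    ring
  have hsinh : Real.sinh (2*K) = 1 := by
    rw [h2K, Real.sinh_eq, Real.exp_log hpos, Real.exp_neg, Real.exp_log hpos, hinv]
    ring
  have hco : 2 * Real.tanh (2*K) / Real.cosh (2*K) / 2 = 1/2 := by
    rw [Real.tanh_eq_sinh_div_cosh, hsinh, hcosh]
    field_simp
    rw [hs2]
  rw [logZ, hco, hcosh]
  rw [double_integral]
  have hlog2s : Real.log (2*Real.sqrt 2) = 3/2 * Real.log 2 := by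
    rw [Real.log_mul two_ne_zero hspos.ne', Real.log_sqrt (by norm_num)]
    ring
  have hexp : Real.log (2*Real.sqrt 2) + 1/(8*π^2) * (16*π*catalanG - 8*π^2*Real.log 2)
      = Real.log 2 / 2 + 2*catalanG/π := by
    rw [hlog2s]
    field_simp
    ring
  rw [hexp, sq, ← Real.exp_add]
  rw [show Real.log 2 / 2 + 2*catalanG/π + (Real.log 2 / 2 + 2*catalanG/π)
      = Real.log 2 + 4*catalanG/π by ring]
  rw [Real.exp_add, Real.exp_log two_pos]
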